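/- arXiv:2402.15007 — 3 statements merged into one kernel-verified Lean document; each statement's English description precedes it below -/
import Mathlib

section
/- Let μ be the standard Gaussian measure on ℝ^d and K ⊆ ℝ^d a symmetric closed convex set with μ(Kᶜ) ≤ δ < 1/2, where δ satisfies π(2 log(δ^{-1}) + 8) ≤ δ^{-1}. Then the closed Euclidean ball of radius √(log(δ^{-1})) centered at the origin is contained in K. -/
open MeasureTheory Real

noncomputable def stdGaussian (d : ℕ) : Measure (EuclideanSpace ℝ (Fin d)) :=
  volume.withDensity fun x => ENNReal.ofReal ((2 * π) ^ (-(d : ℝ) / 2) * exp (-‖x‖ ^ 2 / 2))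

/-!
If some `x ∉ K` had `‖x‖ ≤ r := √(log δ⁻¹)`, a functional `L` of norm one separating `x` from `K`
would give, by symmetry of `K`, `K ⊆ {|L| < r}`. Under `μ`, `L` is a standard normal variable `N`,
so `μ(Kᶜ) ≥ 2 P(N > r)`. The Mills-ratio bound `P(N > r) ≥ r / (r² + 1) φ(r)`, where
`φ(r) = √δ / √(2π)`, makes this exceed `δ` under the smallness condition on `δ`.
-/

open Set Filter Topology
open ProbabilityTheory hiding stdGaussian
open scoped NNReal

section GaussianDensity

variable (V : Type*) [NormedAddCommGroup V] [InnerProductSpace ℝ V]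

noncomputable def gaussianDensity (x : V) : ℝ :=
  (2 * π) ^ (-(Module.finrank ℝ V : ℝ) / 2) * exp (-‖x‖ ^ 2 / 2)

variable {V}

lemma continuous_gaussianDensity : Continuous (gaussianDensity V) := by
  unfold gaussianDensity; fun_prop

lemma gaussianDensity_nonneg (x : V) : 0 ≤ gaussianDensity V x := by
  unfold gaussianDensity; positivity

variable [FiniteDimensional ℝ V] [MeasurableSpace V] [BorelSpace V]

lemma integral_gaussianDensity : ∫ x, gaussianDensity V x = 1 := by
  have h := GaussianFourier.integral_rexp_neg_mul_sq_norm (V := V) (b := 1 / 2) (by norm_num)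
  have hexp : ∀ x : V, -(1 / 2) * ‖x‖ ^ 2 = -‖x‖ ^ 2 / 2 := fun x => by ring
  simp only [hexp, div_div_eq_mul_div, div_one, mul_comm π] at h
  simp only [gaussianDensity]
  rw [integral_const_mul, h, ← rpow_add (by positivity), neg_div, neg_add_cancel, rpow_zero]

lemma integral_gaussianDensity_mul_cexp (t : V) :
    ∫ x, (gaussianDensity V x : ℂ) * Complex.exp (inner ℝ x t * Complex.I) =
      Complex.exp (-‖t‖ ^ 2 / 2) := by
  have h := GaussianFourier.integral_cexp_neg_mul_sq_norm_add (V := V) (b := 1 / 2)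
    (by norm_num) Complex.I t
  have hexp : ∀ x : V, (gaussianDensity V x : ℂ) * Complex.exp (inner ℝ x t * Complex.I) =
      ((2 * π) ^ (-(Module.finrank ℝ V : ℝ) / 2) : ℝ) *
        Complex.exp (-(1 / 2) * ‖x‖ ^ 2 + Complex.I * inner ℝ t x) := by
    intro x
    rw [gaussianDensity, Complex.ofReal_mul, mul_assoc, Complex.ofReal_exp, ← Complex.exp_add,
      real_inner_comm]
    push_cast; ring_nf
  have hπ : (π : ℂ) / (1 / 2) = ((2 * π : ℝ) : ℂ) := by push_cast; ring
  simp_rw [hexp, integral_const_mul, h]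
  rw [hπ, Complex.ofReal_cpow (by positivity), ← mul_assoc, ← Complex.cpow_add _ _
    (by exact_mod_cast (by positivity : (2 * π : ℝ) ≠ 0))]
  push_cast
  rw [neg_div, neg_add_cancel, Complex.cpow_zero, one_mul, Complex.I_sq]
  ring_nf

lemma withDensity_gaussianDensity :
    volume.withDensity (fun x => ENNReal.ofReal (gaussianDensity V x)) =
      ProbabilityTheory.stdGaussian V := by
  have hmeas := continuous_gaussianDensity (V := V).measurable
  have hint : Integrable (gaussianDensity V) :=
    Integrable.of_integral_ne_zero (by rw [integral_gaussianDensity]; norm_num)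
  have : IsProbabilityMeasure
      (volume.withDensity fun x => ENNReal.ofReal (gaussianDensity V x)) := by
    constructor
    rw [withDensity_apply _ MeasurableSet.univ, Measure.restrict_univ,
      ← ofReal_integral_eq_lintegral_ofReal hint (.of_forall gaussianDensity_nonneg),
      integral_gaussianDensity, ENNReal.ofReal_one]
  refine Measure.ext_of_charFun (funext fun t => ?_)
  rw [charFun_stdGaussian, charFun_apply,
    integral_withDensity_eq_integral_toReal_smul hmeas.ennreal_ofReal
      (.of_forall fun _ => ENNReal.ofReal_lt_top)]
  simp_rw [ENNReal.toReal_ofReal (gaussianDensity_nonneg _), Complex.real_smul]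
  exact integral_gaussianDensity_mul_cexp t

end GaussianDensity

lemma stdGaussian_eq_stdGaussian_euclideanSpace (d : ℕ) :
    stdGaussian d = ProbabilityTheory.stdGaussian (EuclideanSpace ℝ (Fin d)) := by
  rw [← withDensity_gaussianDensity]
  simp only [stdGaussian, gaussianDensity, finrank_euclideanSpace_fin]

section Projections

variable {V : Type*} [NormedAddCommGroup V] [InnerProductSpace ℝ V] [FiniteDimensional ℝ V]
  [MeasurableSpace V] [BorelSpace V]

lemma map_stdGaussian_of_norm_eq_one {L : StrongDual ℝ V} (hL : ‖L‖ = 1) :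
    (ProbabilityTheory.stdGaussian V).map L = gaussianReal 0 1 := by
  rw [IsGaussian.map_eq_gaussianReal, integral_strongDual_stdGaussian, variance_dual_stdGaussian,
    hL]
  simp

lemma stdGaussian_setOf_lt {L : StrongDual ℝ V} (hL : ‖L‖ = 1) (r : ℝ) :
    ProbabilityTheory.stdGaussian V {x | r < L x} = gaussianReal 0 1 (Ioi r) := by
  rw [← map_stdGaussian_of_norm_eq_one hL, Measure.map_apply (by fun_prop) measurableSet_Ioi]
  rfl

lemma stdGaussian_setOf_lt_abs {L : StrongDual ℝ V} (hL : ‖L‖ = 1) {r : ℝ} (hr : 0 ≤ r) :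
    ProbabilityTheory.stdGaussian V {x | r < |L x|} = 2 * gaussianReal 0 1 (Ioi r) := by
  have hunion : {x | r < |L x|} = {x | r < L x} ∪ {x | r < (-L) x} := by
    ext x; simp only [mem_ofPred_eq, mem_union, neg_apply, lt_abs]
  have hdisj : Disjoint {x | r < L x} {x | r < (-L) x} := by
    rw [disjoint_left]
    intro x h1 h2
    simp only [mem_ofPred_eq, neg_apply] at h1 h2
    linarith
  rw [hunion, measure_union hdisj (measurableSet_lt measurable_const (by fun_prop)),
    stdGaussian_setOf_lt hL, stdGaussian_setOf_lt (by rwa [norm_neg]), two_mul]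

end Projections

lemma hasDerivAt_gaussianPDFReal (μ : ℝ) (v : ℝ≥0) (x : ℝ) :
    HasDerivAt (gaussianPDFReal μ v) (-(x - μ) / v * gaussianPDFReal μ v x) x := by
  refine HasDerivAt.congr_deriv (f := gaussianPDFReal μ v)
    (((((hasDerivAt_id x).sub_const μ).pow 2).neg.div_const (2 * (v : ℝ))).exp.const_mul
      (√(2 * π * v))⁻¹) ?_
  by_cases hv : (v : ℝ) = 0
  · simp [hv]
  · simp only [gaussianPDFReal, id, Pi.pow_apply, Pi.neg_apply]
    field_simp
    ring

lemma tendsto_gaussianPDFReal_atTop (μ : ℝ) (v : ℝ≥0) :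
    Tendsto (gaussianPDFReal μ v) atTop (𝓝 0) := by
  rcases eq_or_ne v 0 with rfl | hv
  · simp only [gaussianPDFReal_zero_var]; exact tendsto_const_nhds
  have hsq : Tendsto (fun x => (x - μ) ^ 2) atTop atTop :=
    (tendsto_pow_atTop two_ne_zero).comp (tendsto_atTop_add_const_right _ (-μ) tendsto_id)
  have hexp := tendsto_exp_atBot.comp ((tendsto_neg_atTop_atBot.comp hsq).atBot_div_const
    (by positivity : (0 : ℝ) < 2 * v))
  rw [gaussianPDFReal_def]
  simpa only [mul_zero, Function.comp_def] using hexp.const_mul (√(2 * π * v))⁻¹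

/-- `x / (x² + 1) φ(x)` is an antiderivative of `-(φ - 2 φ / (x² + 1)²)`, and that integrand is
at most `φ`. -/
lemma ofReal_mul_gaussianPDFReal_le_gaussianReal_Ioi (r : ℝ) :
    ENNReal.ofReal (r / (r ^ 2 + 1) * gaussianPDFReal 0 1 r) ≤ gaussianReal 0 1 (Ioi r) := by
  set φ := gaussianPDFReal 0 1
  set ψ : ℝ → ℝ := fun x => φ x - 2 / (x ^ 2 + 1) ^ 2 * φ x
  have hφ : Integrable φ := integrable_gaussianPDFReal 0 1
  have hψ : Integrable ψ := by
    refine hφ.sub (hφ.bdd_mul (c := 2) ?_ ?_)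
    · exact (continuous_const.div (by fun_prop) fun x => by positivity).aestronglyMeasurable
    · refine .of_forall fun x => ?_
      rw [norm_div, Real.norm_of_nonneg (by positivity), Real.norm_of_nonneg (by positivity)]
      exact div_le_self zero_le_two (one_le_pow₀ (by nlinarith))
  have hderiv : ∀ x, HasDerivAt (fun x => x / (x ^ 2 + 1) * φ x) (-ψ x) x := by
    intro x
    have hq : HasDerivAt (fun x : ℝ => x / (x ^ 2 + 1)) _ x :=
      (hasDerivAt_id x).div (((hasDerivAt_id x).pow 2).add_const 1) (by positivity)
    refine (hq.mul (hasDerivAt_gaussianPDFReal 0 1 x)).congr_deriv ?_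
    simp only [ψ, φ, id, NNReal.coe_one]
    field_simp
    ring
  have hlim : Tendsto (fun x => x / (x ^ 2 + 1) * φ x) atTop (𝓝 0) := by
    refine isBoundedUnder_le_mul_tendsto_zero ?_ (tendsto_gaussianPDFReal_atTop 0 1)
    refine isBoundedUnder_of_eventually_le (a := 1) (.of_forall fun x => ?_)
    rw [Function.comp_apply, norm_div, Real.norm_of_nonneg (by positivity : (0:ℝ) ≤ x ^ 2 + 1),
      div_le_one (by positivity), Real.norm_eq_abs]
    nlinarith [abs_nonneg x, sq_abs x]
  have hG : ∫ x in Ioi r, ψ x = r / (r ^ 2 + 1) * φ r := by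
    have := integral_Ioi_of_hasDerivAt_of_tendsto' (a := r) (fun x _ => hderiv x)
      hψ.neg.integrableOn hlim
    rw [integral_neg] at this
    linarith
  rw [gaussianReal_apply_eq_integral 0 one_ne_zero, ← hG]
  refine ENNReal.ofReal_le_ofReal (setIntegral_mono hψ.integrableOn hφ.integrableOn fun x => ?_)
  have : 0 ≤ 2 / (x ^ 2 + 1) ^ 2 * φ x :=
    mul_nonneg (by positivity) (gaussianPDFReal_nonneg 0 1 x)
  simp only [ψ]; linarith

lemma exists_norm_eq_one_forall_lt_norm_of_notMem {E : Type*} [NormedAddCommGroup E]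
    [InnerProductSpace ℝ E] {K : Set E} (hconv : Convex ℝ K) (hclosed : IsClosed K)
    (hne : K.Nonempty) {x : E} (hx : x ∉ K) :
    ∃ L : StrongDual ℝ E, ‖L‖ = 1 ∧ ∀ a ∈ K, L a < ‖x‖ := by
  obtain ⟨f, u, hfK, hfx⟩ := geometric_hahn_banach_closed_point hconv hclosed hx
  have hf : f ≠ 0 := by
    rintro rfl
    obtain ⟨a, ha⟩ := hne
    have := hfK a ha
    simp only [zero_apply] at this hfx
    linarith
  have hnf : 0 < ‖f‖ := norm_pos_iff.mpr hf
  refine ⟨‖f‖⁻¹ • f, norm_smul_inv_norm hf, fun a ha => ?_⟩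
  rw [smul_apply, smul_eq_mul, inv_mul_lt_iff₀ hnf]
  exact (hfK a ha).trans (hfx.trans_le ((Real.le_norm_self _).trans (f.le_opNorm x)))

lemma lt_two_mul_sqrt_log_inv_mul_gaussianPDFReal {δ : ℝ} (hδ0 : 0 < δ) (hδ : δ < 1 / 2)
    (hcond : π * (2 * log δ⁻¹ + 8) ≤ δ⁻¹) :
    δ < 2 * (√(log δ⁻¹) / (√(log δ⁻¹) ^ 2 + 1) * gaussianPDFReal 0 1 √(log δ⁻¹)) := by
  set L := log δ⁻¹ with hLdef
  have hL : 1 / 2 < L := by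
    have h2 : Real.log 2 < L := Real.log_lt_log (by norm_num) (by
      rw [lt_inv_comm₀ (by norm_num) hδ0]; linarith)
    linarith [Real.log_two_gt_d9]
  have hL0 : 0 < L := by linarith
  have hδL : exp (-L / 2) = √δ := by
    rw [hLdef, Real.log_inv, neg_neg, Real.sqrt_eq_rpow, Real.rpow_def_of_pos hδ0]
    ring_nf
  have hcond' : π * δ * (2 * L + 8) ≤ 1 := by
    have := mul_le_mul_of_nonneg_left hcond hδ0.le
    rwa [mul_inv_cancel₀ hδ0.ne', ← mul_assoc, mul_comm δ] at this
  have hkey : 2 * π * δ * (L + 1) ^ 2 < 4 * L := by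
    have hsq : (L + 1) ^ 2 < 2 * L * (2 * L + 8) := by nlinarith
    nlinarith [mul_lt_mul_of_pos_left hsq (mul_pos pi_pos hδ0)]
  have hφ : gaussianPDFReal 0 1 √L = (√(2 * π))⁻¹ * √δ := by
    simp [gaussianPDFReal, Real.sq_sqrt hL0.le, ← hδL, neg_div]
  have hroot : √δ * ((L + 1) * √(2 * π)) < 2 * √L := by
    refine lt_of_pow_lt_pow_left₀ 2 (by positivity) ?_
    rw [mul_pow, mul_pow, mul_pow, Real.sq_sqrt hδ0.le, Real.sq_sqrt (by positivity),
      Real.sq_sqrt hL0.le]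
    linarith
  rw [hφ, Real.sq_sqrt hL0.le, show 2 * (√L / (L + 1) * ((√(2 * π))⁻¹ * √δ)) =
    √δ * (2 * √L) / ((L + 1) * √(2 * π)) by field_simp, lt_div_iff₀ (by positivity)]
  calc δ * ((L + 1) * √(2 * π)) = √δ * (√δ * ((L + 1) * √(2 * π))) := by
        rw [← mul_assoc √δ, Real.mul_self_sqrt hδ0.le]
    _ < √δ * (2 * √L) := mul_lt_mul_of_pos_left hroot (Real.sqrt_pos.mpr hδ0)

/-- under the smallness condition on δ, K contains the ball of radius
√(log δ⁻¹). -/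
theorem stmt1 (d : ℕ) (K : Set (EuclideanSpace ℝ (Fin d))) (δ : ℝ)
    (hKsym : ∀ x ∈ K, -x ∈ K) (hKclosed : IsClosed K) (hKconv : Convex ℝ K)
    (hδ0 : 0 < δ) (hδhalf : δ < 1 / 2)
    (hμ : stdGaussian d Kᶜ ≤ ENNReal.ofReal δ)
    (hδcond : π * (2 * Real.log δ⁻¹ + 8) ≤ δ⁻¹) :
    Metric.closedBall 0 (Real.sqrt (Real.log δ⁻¹)) ⊆ K := by
  intro x hx
  by_contra hxK
  rw [stdGaussian_eq_stdGaussian_euclideanSpace] at hμ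
  set r := √(log δ⁻¹)
  have hne : K.Nonempty := by
    refine nonempty_iff_ne_empty.mpr fun hK => ?_
    rw [hK, compl_empty, measure_univ, ENNReal.one_le_ofReal] at hμ
    linarith
  obtain ⟨L, hL, hLK⟩ := exists_norm_eq_one_forall_lt_norm_of_notMem hKconv hKclosed hne hxK
  have hxr : ‖x‖ ≤ r := mem_closedBall_zero_iff.mp hx
  have hslab : {y | r < |L y|} ⊆ Kᶜ := fun y hy hyK => by
    have hneg := hLK (-y) (hKsym y hyK)
    rw [map_neg] at hneg
    exact lt_asymm hy (abs_lt.mpr ⟨by linarith, (hLK y hyK).trans_le hxr⟩)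
  have := calc
    ENNReal.ofReal δ < ENNReal.ofReal (2 * (r / (r ^ 2 + 1) * gaussianPDFReal 0 1 r)) :=
      (ENNReal.ofReal_lt_ofReal_iff_of_nonneg hδ0.le).mpr
        (lt_two_mul_sqrt_log_inv_mul_gaussianPDFReal hδ0 hδhalf hδcond)
    _ ≤ 2 * gaussianReal 0 1 (Ioi r) := by
      rw [ENNReal.ofReal_mul zero_le_two, ENNReal.ofReal_ofNat]
      gcongr
      exact ofReal_mul_gaussianPDFReal_le_gaussianReal_Ioi r
    _ = ProbabilityTheory.stdGaussian _ {y | r < |L y|} :=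
      (stdGaussian_setOf_lt_abs hL (Real.sqrt_nonneg _)).symm
    _ ≤ ENNReal.ofReal δ := (measure_mono hslab).trans hμ
  exact this.false
end

section
/- Let K ⊆ ℝ^d be a nonempty closed convex set, n > 1, C = 8n²/(n²−1), and σ : [0,∞) → [0,∞) a C² function that is non-increasing, satisfies |σ'(t)| ≤ (t−1)/C for t ≥ 1 and σ'(t) = 0 for t ≤ 1, and |σ''(t)| ≤ 1/C everywhere. Then the function x ↦ σ(d(x,K)) + ((n²−1)/(2n²))·‖x‖² is convex on ℝ^d. -/
/-!
If `P ∈ K` is a point nearest to `y`, then `σ (d(·, K)) ≥ σ ‖· - P‖` everywhere (`σ` is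
non-increasing), with equality at `y`. So `σ ∘ d(·, K)` is a pointwise attained supremum of
translates of `σ ∘ ‖·‖` and inherits its strong-convexity modulus `-2/C`, i.e. it suffices that
`x ↦ σ ‖x‖ + ‖x‖² / C` is convex; then `(n² - 1) / (2n²) ≥ 1 / C` concludes.
On a line at distance `a` from the origin that function is `w ↦ σ √(a² + w²) + (a² + w²) / C`,
whose second derivative is `σ'' r · w² / r² + σ' r · a² / r³ + 2 / C` with `r = √(a² + w²)`;
`|σ''| ≤ 1 / C` and `|σ' r| ≤ (r - 1) / C` bound each of the first two terms below by `-1 / C`.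
-/

open Set Metric Filter Topology
open scoped RealInnerProductSpace

section UniformConvexity

variable {E : Type*} [NormedAddCommGroup E] [NormedSpace ℝ E] {s : Set E} {φ : ℝ → ℝ}
  {f : E → ℝ}

theorem UniformConvexOn.comp_sub_const (hf : UniformConvexOn s φ f) (c : E) :
    UniformConvexOn ((· - c) ⁻¹' s) φ fun x => f (x - c) := by
  refine ⟨by simpa only [sub_eq_neg_add] using hf.1.translate_preimage_right (-c),
    fun x hx y hy a b ha hb hab => ?_⟩
  have hcomb : a • (x - c) + b • (y - c) = a • x + b • y - c := by
    rw [smul_sub, smul_sub, sub_add_sub_comm, Convex.combo_self hab]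
  simpa only [hcomb, sub_sub_sub_cancel_right] using hf.2 hx hy ha hb hab

theorem uniformConvexOn_of_le_of_exists_eq {ι : Type*} {g : ι → E → ℝ} (hs : Convex ℝ s)
    (hg : ∀ i, UniformConvexOn s φ (g i)) (hle : ∀ i, ∀ x ∈ s, g i x ≤ f x)
    (heq : ∀ x ∈ s, ∃ i, g i x = f x) : UniformConvexOn s φ f := by
  refine ⟨hs, fun x hx y hy a b ha hb hab => ?_⟩
  obtain ⟨i, hi⟩ := heq _ (hs hx hy ha hb hab)
  calc f (a • x + b • y) = g i (a • x + b • y) := hi.symm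
    _ ≤ a • g i x + b • g i y - a * b * φ ‖x - y‖ := (hg i).2 hx hy ha hb hab
    _ ≤ a • f x + b • f y - a * b * φ ‖x - y‖ := by
      gcongr
      exacts [hle i x hx, hle i y hy]

end UniformConvexity

section Radial

variable {E : Type*} [NormedAddCommGroup E] [InnerProductSpace ℝ E]

theorem norm_add_smul_eq_sqrt_of_inner_eq_zero {c u : E} (h : ⟪c, u⟫ = 0) (w : ℝ) :
    ‖c + w • u‖ = √(‖c‖ ^ 2 + (‖u‖ * w) ^ 2) := by
  have h' : ⟪c, w • u⟫ = 0 := by rw [real_inner_smul_right, h, mul_zero]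
  rw [← Real.sqrt_sq (norm_nonneg _), sq, norm_add_sq_eq_norm_sq_add_norm_sq_real h', norm_smul,
    Real.norm_eq_abs]
  congr 1
  rw [mul_pow, ← sq_abs w]
  ring

theorem convexOn_univ_comp_norm {f : ℝ → ℝ}
    (hf : ∀ a, ConvexOn ℝ univ fun w => f √(a ^ 2 + w ^ 2)) :
    ConvexOn ℝ univ fun x : E => f ‖x‖ := by
  refine ⟨convex_univ, fun x _ z _ p q hp hq hpq => ?_⟩
  -- `c` is the point of the line through `x` and `z` closest to the origin.
  obtain ⟨u, hu⟩ : ∃ u, u = z - x := ⟨_, rfl⟩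
  obtain ⟨s, hs⟩ : ∃ s, s = ⟪x, u⟫ / ‖u‖ ^ 2 := ⟨_, rfl⟩
  obtain ⟨c, hc⟩ : ∃ c, c = x - s • u := ⟨_, rfl⟩
  have hcu : ⟪c, u⟫ = 0 := by
    rcases eq_or_ne u 0 with rfl | hu0
    · exact inner_zero_right _
    rw [hc, hs, inner_sub_left, real_inner_smul_left, real_inner_self_eq_norm_sq]
    field_simp
    ring
  have hline (w : ℝ) : f ‖c + w • u‖ = f √(‖c‖ ^ 2 + (‖u‖ * w) ^ 2) := by
    rw [norm_add_smul_eq_sqrt_of_inner_eq_zero hcu]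
  have hx : x = c + s • u := by rw [hc, sub_add_cancel]
  have hz : z = c + (s + 1) • u := by
    rw [add_smul, one_smul, ← add_assoc, ← hx, hu, add_sub_cancel]
  have hy : p • x + q • z = c + (p * s + q * (s + 1)) • u := by
    calc p • x + q • z = (p • c + q • c) + (p * s + q * (s + 1)) • u := by rw [hx, hz]; module
      _ = c + (p * s + q * (s + 1)) • u := by rw [Convex.combo_self hpq]
  calc f ‖p • x + q • z‖
      = f √(‖c‖ ^ 2 + (p * (‖u‖ * s) + q * (‖u‖ * (s + 1))) ^ 2) := by
        rw [hy, hline]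
        ring_nf
    _ ≤ p • f √(‖c‖ ^ 2 + (‖u‖ * s) ^ 2) + q • f √(‖c‖ ^ 2 + (‖u‖ * (s + 1)) ^ 2) :=
        (hf ‖c‖).2 trivial trivial hp hq hpq
    _ = p • f ‖x‖ + q • f ‖z‖ := by rw [hx, hz, hline, hline]

end Radial

section Profile

variable {σ : ℝ → ℝ} {C : ℝ}

theorem hasDerivAt_comp_sqrt_sq_add_sq {φ : ℝ → ℝ} (hφ : ∀ t, 0 < t → DifferentiableAt ℝ φ t)
    (hφ0 : ∀ᶠ t in 𝓝 0, φ t = φ 0) (a w : ℝ) :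
    HasDerivAt (fun w => φ √(a ^ 2 + w ^ 2))
      (deriv φ √(a ^ 2 + w ^ 2) * (w / √(a ^ 2 + w ^ 2))) w := by
  rcases (Real.sqrt_nonneg (a ^ 2 + w ^ 2)).eq_or_lt with hr | hr
  · rw [← hr, div_zero, mul_zero]
    have hlim : Tendsto (fun w => √(a ^ 2 + w ^ 2)) (𝓝 w) (𝓝 0) :=
      hr ▸ (by fun_prop : Continuous fun w : ℝ => √(a ^ 2 + w ^ 2)).tendsto w
    exact (hasDerivAt_const w (φ 0)).congr_of_eventuallyEq (hlim.eventually hφ0)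
  · have hsqrt : HasDerivAt (fun w => √(a ^ 2 + w ^ 2)) (w / √(a ^ 2 + w ^ 2)) w := by
      convert ((hasDerivAt_pow 2 w).const_add (a ^ 2)).sqrt (Real.sqrt_pos.mp hr).ne' using 1
      field_simp
      ring
    exact (hφ _ hr).hasDerivAt.comp w hsqrt

theorem neg_two_div_le_radial_second_deriv (hC : 0 < C)
    (hσ'1 : ∀ t, 1 ≤ t → |deriv σ t| ≤ (t - 1) / C) (hσ'0 : ∀ t, t ≤ 1 → deriv σ t = 0)
    (hσ'' : ∀ t, |deriv (deriv σ) t| ≤ 1 / C) {a w r : ℝ} (hr : 0 < r)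
    (hr2 : r ^ 2 = a ^ 2 + w ^ 2) :
    -(2 / C) ≤ deriv (deriv σ) r * (w ^ 2 / r ^ 2) + deriv σ r * (a ^ 2 / r ^ 3) := by
  have hw : w ^ 2 / r ^ 2 ≤ 1 := by rw [div_le_one (by positivity)]; nlinarith
  have h2 : -(1 / C) ≤ deriv (deriv σ) r * (w ^ 2 / r ^ 2) := by
    refine neg_le_of_abs_le ?_
    rw [abs_mul, abs_of_nonneg (by positivity : 0 ≤ w ^ 2 / r ^ 2)]
    simpa using mul_le_mul (hσ'' r) hw (by positivity) (by positivity)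
  have h1 : -(1 / C) ≤ deriv σ r * (a ^ 2 / r ^ 3) := by
    rcases le_or_gt r 1 with hr1 | hr1
    · rw [hσ'0 r hr1, zero_mul, neg_nonpos]
      positivity
    have ha : a ^ 2 / r ^ 3 ≤ 1 / r := by rw [div_le_div_iff₀ (by positivity) hr]; nlinarith
    refine neg_le_of_abs_le ?_
    rw [abs_mul, abs_of_nonneg (by positivity : 0 ≤ a ^ 2 / r ^ 3)]
    calc |deriv σ r| * (a ^ 2 / r ^ 3) ≤ (r - 1) / C * (1 / r) :=
          mul_le_mul (hσ'1 r hr1.le) ha (by positivity) (div_nonneg (by linarith) hC.le)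
      _ ≤ 1 / C := by rw [div_mul_div_comm, div_le_div_iff₀ (by positivity) hC]; nlinarith
  linarith [show 2 / C = 1 / C + 1 / C by ring]

theorem convexOn_univ_comp_sqrt_sq_add_sq (hC : 0 < C) (hσ : Differentiable ℝ σ)
    (hσ' : Differentiable ℝ (deriv σ)) (hσ'1 : ∀ t, 1 ≤ t → |deriv σ t| ≤ (t - 1) / C)
    (hσ'0 : ∀ t, t ≤ 1 → deriv σ t = 0) (hσ'' : ∀ t, |deriv (deriv σ) t| ≤ 1 / C) (a : ℝ) :
    ConvexOn ℝ univ fun w => σ √(a ^ 2 + w ^ 2) + w ^ 2 / C := by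
  -- `σ' r * (w / r) = ψ r * w`, and unlike `w / r`, `ψ` is locally constant near `r = 0`
  -- since it vanishes on `(-∞, 1]`.
  obtain ⟨ψ, hψdef⟩ : ∃ ψ : ℝ → ℝ, ψ = fun r => deriv σ r / r := ⟨_, rfl⟩
  have hσ0 : ∀ᶠ t in 𝓝 0, σ t = σ 0 := by
    filter_upwards [Iio_mem_nhds one_pos] with t ht
    exact isOpen_Iio.is_const_of_deriv_eq_zero isPreconnected_Iio hσ.differentiableOn
      (fun t ht => hσ'0 t ht.le) ht (mem_Iio.2 one_pos)
  have hψ0 : ∀ᶠ t in 𝓝 0, ψ t = ψ 0 := by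
    filter_upwards [Iic_mem_nhds one_pos] with t ht
    simp [hψdef, hσ'0 t ht]
  have hψ (t : ℝ) (ht : 0 < t) :
      HasDerivAt ψ ((deriv (deriv σ) t * t - deriv σ t * 1) / t ^ 2) t :=
    hψdef ▸ (hσ' t).hasDerivAt.div (hasDerivAt_id t) ht.ne'
  have hd1 (w : ℝ) : HasDerivAt (fun w => σ √(a ^ 2 + w ^ 2) + w ^ 2 / C)
      (ψ √(a ^ 2 + w ^ 2) * w + 2 * w / C) w := by
    refine ((hasDerivAt_comp_sqrt_sq_add_sq (fun t _ => hσ t) hσ0 a w).add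
      ((hasDerivAt_pow 2 w).div_const C)).congr_deriv ?_
    rw [hψdef]
    ring
  have hd2 (w : ℝ) : ∃ g'', HasDerivAt (fun w => ψ √(a ^ 2 + w ^ 2) * w + 2 * w / C) g'' w ∧
      0 ≤ g'' := by
    refine ⟨_, ((hasDerivAt_comp_sqrt_sq_add_sq (fun t ht => (hψ t ht).differentiableAt) hψ0 a
      w).mul (hasDerivAt_id w)).add (((hasDerivAt_id w).const_mul 2).div_const C), ?_⟩
    obtain ⟨r, hr, hr2⟩ : ∃ r, √(a ^ 2 + w ^ 2) = r ∧ r ^ 2 = a ^ 2 + w ^ 2 :=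
      ⟨_, rfl, Real.sq_sqrt (by positivity)⟩
    rw [hr]
    rcases (hr ▸ Real.sqrt_nonneg _ : 0 ≤ r).eq_or_lt with rfl | hr0
    · simp only [hψdef, div_zero, mul_zero, zero_mul, zero_add, id]
      positivity
    calc 0 ≤ deriv (deriv σ) r * (w ^ 2 / r ^ 2) + deriv σ r * (a ^ 2 / r ^ 3) + 2 / C := by
          linarith [neg_two_div_le_radial_second_deriv hC hσ'1 hσ'0 hσ'' hr0 hr2]
      _ = _ := by
          rw [(hψ r hr0).deriv, hψdef, id_eq]
          field_simp
          linear_combination -C * deriv σ r * hr2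
  choose g'' hg'' hg''_nonneg using hd2
  exact convexOn_of_hasDerivWithinAt2_nonneg convex_univ
    (continuous_iff_continuousAt.2 fun w => (hd1 w).continuousAt).continuousOn
    (fun w _ => (hd1 w).hasDerivWithinAt) (fun w _ => (hg'' w).hasDerivWithinAt)
    fun w _ => hg''_nonneg w

theorem strongConvexOn_univ_comp_norm {E : Type*} [NormedAddCommGroup E] [InnerProductSpace ℝ E]
    (hC : 0 < C) (hσ : Differentiable ℝ σ) (hσ' : Differentiable ℝ (deriv σ))
    (hσ'1 : ∀ t, 1 ≤ t → |deriv σ t| ≤ (t - 1) / C) (hσ'0 : ∀ t, t ≤ 1 → deriv σ t = 0)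
    (hσ'' : ∀ t, |deriv (deriv σ) t| ≤ 1 / C) :
    StrongConvexOn (univ : Set E) (-(2 / C)) fun x => σ ‖x‖ := by
  rw [strongConvexOn_iff_convex]
  refine (convexOn_univ_comp_norm (f := fun r => σ r + r ^ 2 / C) fun a => ?_).congr
    fun x _ => by ring
  refine ((convexOn_univ_comp_sqrt_sq_add_sq hC hσ hσ' hσ'1 hσ'0 hσ'' a).add_const
    (a ^ 2 / C)).congr fun w _ => ?_
  rw [Pi.add_apply, Real.sq_sqrt (by positivity)]
  ring

end Profile

theorem StrongConvexOn.comp_infDist {E : Type*} [NormedAddCommGroup E] [NormedSpace ℝ E]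
    [ProperSpace E] {σ : ℝ → ℝ} {m : ℝ} {K : Set E}
    (hσ : StrongConvexOn univ m fun x : E => σ ‖x‖) (hσmono : AntitoneOn σ (Ici 0))
    (hKne : K.Nonempty) (hKclosed : IsClosed K) :
    StrongConvexOn univ m fun x => σ (infDist x K) := by
  refine uniformConvexOn_of_le_of_exists_eq (ι := K) (g := fun P x => σ ‖x - P‖) convex_univ
    (fun P => by simpa using hσ.comp_sub_const (P : E)) ?_ ?_
  · rintro ⟨P, hP⟩ x -
    refine hσmono infDist_nonneg (norm_nonneg _) ?_
    simpa [dist_eq_norm] using infDist_le_dist_of_mem (x := x) hP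
  · intro x _
    obtain ⟨P, hP, hd⟩ := hKclosed.exists_infDist_eq_dist hKne x
    exact ⟨⟨P, hP⟩, by simp [hd, dist_eq_norm]⟩

theorem stmt13_general (d : ℕ) (K : Set (EuclideanSpace ℝ (Fin d))) (n : ℝ) (σ : ℝ → ℝ)
    (hKne : K.Nonempty) (hKclosed : IsClosed K)
    (hn : 1 < n) (C : ℝ) (hCdef : C = 8 * n ^ 2 / (n ^ 2 - 1))
    (hσ : ContDiff ℝ 2 σ) (hσmono : AntitoneOn σ (Set.Ici 0))
    (hσ'1 : ∀ t, 1 ≤ t → |deriv σ t| ≤ (t - 1) / C)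
    (hσ'0 : ∀ t, t ≤ 1 → deriv σ t = 0)
    (hσ'' : ∀ t, |deriv (deriv σ) t| ≤ 1 / C) :
    ConvexOn ℝ Set.univ
      (fun x => σ (Metric.infDist x K) + ((n ^ 2 - 1) / (2 * n ^ 2)) * ‖x‖ ^ 2) := by
  have hn2 : 0 < n ^ 2 - 1 := by nlinarith
  have hC : 0 < C := by rw [hCdef]; positivity
  have hm : -((n ^ 2 - 1) / n ^ 2) ≤ -(2 / C) := by
    rw [hCdef, neg_le_neg_iff, div_div_eq_mul_div, div_le_div_iff₀ (by positivity) (by positivity)]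
    nlinarith
  have hσd : Differentiable ℝ σ := hσ.differentiable (by norm_num)
  have hσ'd : Differentiable ℝ (deriv σ) := (hσ.deriv' (n := 1)).differentiable one_ne_zero
  have hconv := ((strongConvexOn_univ_comp_norm hC hσd hσ'd hσ'1 hσ'0 hσ'').comp_infDist hσmono
    hKne hKclosed).mono hm
  rw [strongConvexOn_iff_convex] at hconv
  exact hconv.congr fun x _ => by ring

/-- x ↦ σ(d(x,K)) + ((n²−1)/(2n²))‖x‖² is convex. -/
theorem stmt13 (d : ℕ) (K : Set (EuclideanSpace ℝ (Fin d))) (n : ℝ) (σ : ℝ → ℝ)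
    (hKne : K.Nonempty) (hKclosed : IsClosed K) (hKconv : Convex ℝ K)
    (hn : 1 < n) (C : ℝ) (hCdef : C = 8 * n ^ 2 / (n ^ 2 - 1))
    (hσ : ContDiff ℝ 2 σ) (hσmono : AntitoneOn σ (Set.Ici 0))
    (hσ'1 : ∀ t, 1 ≤ t → |deriv σ t| ≤ (t - 1) / C)
    (hσ'0 : ∀ t, t ≤ 1 → deriv σ t = 0)
    (hσ'' : ∀ t, |deriv (deriv σ) t| ≤ 1 / C) :
    ConvexOn ℝ Set.univ
      (fun x => σ (Metric.infDist x K) + ((n ^ 2 - 1) / (2 * n ^ 2)) * ‖x‖ ^ 2) :=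
  stmt13_general d K n σ hKne hKclosed hn C hCdef hσ hσmono hσ'1 hσ'0 hσ''
end

section
/- Let K ⊆ ℝ^d be a symmetric closed convex set, n > 1, and σ as in the convexity lemma (non-increasing, C², σ ≡ R² on [0,1], σ ≡ 0 on [3CR, ∞), |σ'(t)| ≤ (t−1)/C for t ≥ 1, |σ''| ≤ 1/C, with C = 8n²/(n²−1)). Then the density x ↦ exp(−σ(d(x,K)) − ((n²−1)/(2n²))‖x‖²) is log-concave and even on ℝ^d. -/
/-!
Write `t = d(x, K)`, `s = d(y, K)`, `u = d(a x + b y, K)`, `v = a t + b s` and `δ = ‖x - y‖`.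
Convexity of `K` gives `u ≤ v`; the identity
`d(a x + b y, p)² = a d(x, p)² + b d(y, p)² - a b δ²` gives `u² ≥ a t² + b s² - a b δ²`;
and `d(·, K)` is 1-Lipschitz, so `v - u ≤ 2 a b δ`. Hence `v² - u²` and `(v - u)²` are at most
`a b δ²`. The bound `σ'' ≥ -1/C` gives `σ v ≤ a σ t + b σ s + a b (t - s)² / (2C)`, and since `σ` is
flat on `[0, 1]` with `|σ' ξ| ≤ (ξ - 1)/C`, the mean value theorem gives `σ u - σ v ≤ 2 a b δ² / C`.
So `σ ∘ d(·, K)` fails convexity by at most `4 a b δ² / C`, and `4 / C = (n² - 1)/(2n²)` is exactly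
what the Gaussian term recovers: `a ‖x‖² + b ‖y‖² - ‖a x + b y‖² = a b δ²`.
-/

open Metric Set

lemma infDist_neg_of_forall_neg_mem {E : Type*} [SeminormedAddCommGroup E] {K : Set E}
    (hK : ∀ x ∈ K, -x ∈ K) (x : E) : infDist (-x) K = infDist x K := by
  have hneg : -K = K := Subset.antisymm (fun y hy => by simpa using hK (-y) hy) hK
  calc infDist (-x) K = infDist (-x) (Neg.neg '' K) := by rw [image_neg_eq_neg, hneg]
    _ = infDist x K := infDist_image isometry_neg

section RealFunction

variable {f : ℝ → ℝ}

lemma ContDiff.convexOn_add_mul_sq {M : ℝ} (hf : ContDiff ℝ 2 f)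
    (hf'' : ∀ t, -M ≤ deriv (deriv f) t) :
    ConvexOn ℝ univ (fun t => f t + M / 2 * t ^ 2) := by
  have hf1 : Differentiable ℝ f := hf.differentiable (by norm_num)
  have hf2 : Differentiable ℝ (deriv f) :=
    ((contDiff_succ_iff_deriv (n := 1)).1 hf).2.2.differentiable one_ne_zero
  have hderiv1 : ∀ t, HasDerivAt (fun t => f t + M / 2 * t ^ 2) (deriv f t + M * t) t :=
    fun t => (hf1 t).hasDerivAt.add
      (((hasDerivAt_pow 2 t).const_mul (M / 2)).congr_deriv (by ring))
  have hderiv : deriv (fun t => f t + M / 2 * t ^ 2) = fun t => deriv f t + M * t :=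
    funext fun t => (hderiv1 t).deriv
  have hderiv2 : ∀ t, HasDerivAt (fun t => deriv f t + M * t) (deriv (deriv f) t + M) t :=
    fun t => ((hf2 t).hasDerivAt.add ((hasDerivAt_id' t).const_mul M)).congr_deriv (by ring)
  refine convexOn_univ_of_deriv2_nonneg (fun t => (hderiv1 t).differentiableAt)
    (hderiv ▸ fun t => (hderiv2 t).differentiableAt) fun t => ?_
  rw [Function.iterate_succ_apply, Function.iterate_one, hderiv, (hderiv2 t).deriv]
  linarith [hf'' t]

lemma ContDiff.apply_combo_le_of_neg_le_deriv2 {M : ℝ} (hf : ContDiff ℝ 2 f)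
    (hf'' : ∀ t, -M ≤ deriv (deriv f) t) {a b : ℝ} (ha : 0 ≤ a) (hb : 0 ≤ b) (hab : a + b = 1)
    (t s : ℝ) :
    f (a * t + b * s) ≤ a * f t + b * f s + M / 2 * (a * b * (t - s) ^ 2) := by
  have h := (hf.convexOn_add_mul_sq hf'').2 (mem_univ t) (mem_univ s) ha hb hab
  simp only [smul_eq_mul] at h
  obtain rfl := eq_sub_of_add_eq hab
  linarith

lemma sub_le_of_abs_deriv_le {C : ℝ} (hC : 0 < C) (hf : Differentiable ℝ f)
    (hf' : ∀ t, 1 ≤ t → |deriv f t| ≤ (t - 1) / C) {p q : ℝ} (hp : 1 ≤ p) (hpq : p ≤ q) :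
    f p - f q ≤ (q - 1) * (q - p) / C := by
  have hbound : ∀ t ∈ Icc p q, ‖deriv f t‖ ≤ (q - 1) / C := fun t ht =>
    (hf' t (hp.trans ht.1)).trans (by gcongr; exact ht.2)
  have h := (convex_Icc p q).norm_image_sub_le_of_norm_deriv_le (fun t _ => hf t) hbound
    (left_mem_Icc.2 hpq) (right_mem_Icc.2 hpq)
  rw [Real.norm_eq_abs, Real.norm_eq_abs, abs_of_nonneg (sub_nonneg.2 hpq)] at h
  linarith [neg_abs_le (f q - f p), (show (q - 1) / C * (q - p) = (q - 1) * (q - p) / C by ring)]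

lemma sub_le_of_eqOn_Icc_of_abs_deriv_le {C A : ℝ} (hC : 0 < C) (hf : Differentiable ℝ f)
    (hflat : ∀ t ∈ Icc (0 : ℝ) 1, f t = A) (hf' : ∀ t, 1 ≤ t → |deriv f t| ≤ (t - 1) / C)
    {u v e : ℝ} (hu : 0 ≤ u) (huv : u ≤ v) (hsub : (v - u) ^ 2 ≤ e) (hsq : v ^ 2 - u ^ 2 ≤ e) :
    f u - f v ≤ 2 * e / C := by
  have he : 0 ≤ e := (sq_nonneg _).trans hsub
  rcases le_total v 1 with hv1 | hv1
  · rw [hflat u ⟨hu, huv.trans hv1⟩, hflat v ⟨hu.trans huv, hv1⟩, sub_self]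
    positivity
  rcases le_total 1 u with hu1 | hu1
  · calc f u - f v ≤ (v - 1) * (v - u) / C := sub_le_of_abs_deriv_le hC hf hf' hu1 huv
      _ ≤ 2 * e / C := div_le_div_of_nonneg_right (by nlinarith) hC.le
  · calc f u - f v = f 1 - f v := by rw [hflat u ⟨hu, hu1⟩, hflat 1 ⟨zero_le_one, le_rfl⟩]
      _ ≤ (v - 1) * (v - 1) / C := sub_le_of_abs_deriv_le hC hf hf' le_rfl hv1
      _ ≤ 2 * e / C := div_le_div_of_nonneg_right (by nlinarith) hC.le

lemma apply_le_combo_add_of_near_combo {C A : ℝ} (hC : 0 < C) (hf : ContDiff ℝ 2 f)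
    (hflat : ∀ t ∈ Icc (0 : ℝ) 1, f t = A) (hf' : ∀ t, 1 ≤ t → |deriv f t| ≤ (t - 1) / C)
    (hf'' : ∀ t, |deriv (deriv f) t| ≤ 1 / C) {a b t s u δ : ℝ} (ha : 0 ≤ a) (hb : 0 ≤ b)
    (hab : a + b = 1) (hu : 0 ≤ u) (huv : u ≤ a * t + b * s)
    (hsq : a * t ^ 2 + b * s ^ 2 - a * b * δ ^ 2 ≤ u ^ 2) (htu : t ≤ u + b * δ)
    (hsu : s ≤ u + a * δ) (hts : |t - s| ≤ δ) :
    f u ≤ a * f t + b * f s + 4 * (a * b * δ ^ 2) / C := by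
  set e := a * b * δ ^ 2
  have hab0 : 0 ≤ a * b := mul_nonneg ha hb
  have hvu : a * t + b * s - u ≤ 2 * (a * b) * δ := by
    linear_combination mul_le_mul_of_nonneg_left htu ha + mul_le_mul_of_nonneg_left hsu hb
      + u * hab
  have hsub : (a * t + b * s - u) ^ 2 ≤ e := by
    have h4ab : 4 * (a * b) ≤ 1 := by nlinarith [sq_nonneg (a - b)]
    calc (a * t + b * s - u) ^ 2 ≤ (2 * (a * b) * δ) ^ 2 :=
          pow_le_pow_left₀ (by linarith) hvu 2
      _ = 4 * (a * b) * e := by ring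
      _ ≤ e := mul_le_of_le_one_left (by positivity) h4ab
  have hts' : a * b * (t - s) ^ 2 ≤ e :=
    mul_le_mul_of_nonneg_left (sq_le_sq' (abs_le.1 hts).1 (abs_le.1 hts).2) hab0
  have hsqv : (a * t + b * s) ^ 2 - u ^ 2 ≤ e := by
    have : (a * t + b * s) ^ 2 = a * t ^ 2 + b * s ^ 2 - a * b * (t - s) ^ 2 := by
      obtain rfl := eq_sub_of_add_eq hab; ring
    nlinarith
  have hfu : f u - f (a * t + b * s) ≤ 2 * e / C :=
    sub_le_of_eqOn_Icc_of_abs_deriv_le hC (hf.differentiable (by norm_num)) hflat hf' hu huv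
      hsub hsqv
  have hfv : f (a * t + b * s) ≤ a * f t + b * f s + 1 / C / 2 * (a * b * (t - s) ^ 2) :=
    hf.apply_combo_le_of_neg_le_deriv2 (fun t => (abs_le.1 (hf'' t)).1) ha hb hab t s
  have : 1 / C / 2 * (a * b * (t - s) ^ 2) ≤ 2 * e / C := by
    rw [div_div, one_div_mul_eq_div, div_le_div_iff₀ (by positivity) hC]
    nlinarith
  linarith [show 2 * e / C + 2 * e / C = 4 * e / C by ring]

end RealFunction

section NormedSpace

variable {E : Type*} [NormedAddCommGroup E] [NormedSpace ℝ E]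

lemma infDist_le_infDist_smul_add_smul_add (K : Set E) {a b : ℝ} (hb : 0 ≤ b) (hab : a + b = 1)
    (x y : E) : infDist x K ≤ infDist (a • x + b • y) K + b * ‖x - y‖ := by
  have h : dist x (a • x + b • y) = b * ‖x - y‖ := by
    rw [eq_sub_of_add_eq hab, ← AffineMap.lineMap_apply_module, dist_left_lineMap,
      Real.norm_of_nonneg hb, dist_eq_norm]
  exact h ▸ infDist_le_infDist_add_dist

lemma infDist_smul_add_smul_le {K : Set E} (hK : Convex ℝ K) {a b : ℝ} (ha : 0 ≤ a)
    (hb : 0 ≤ b) (hab : a + b = 1) (x y : E) :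
    infDist (a • x + b • y) K ≤ a * infDist x K + b * infDist y K := by
  rcases K.eq_empty_or_nonempty with rfl | hKne
  · simp
  refine le_of_forall_pos_le_add fun ε hε => ?_
  obtain ⟨p, hp, hxp⟩ := (infDist_lt_iff hKne).1 (lt_add_of_pos_right (infDist x K) hε)
  obtain ⟨q, hq, hyq⟩ := (infDist_lt_iff hKne).1 (lt_add_of_pos_right (infDist y K) hε)
  calc infDist (a • x + b • y) K ≤ dist (a • x + b • y) (a • p + b • q) :=
        infDist_le_dist_of_mem (hK hp hq ha hb hab)
    _ = ‖a • (x - p) + b • (y - q)‖ := by rw [dist_eq_norm]; congr 1; module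
    _ ≤ ‖a • (x - p)‖ + ‖b • (y - q)‖ := norm_add_le _ _
    _ = a * dist x p + b * dist y q := by
        rw [norm_smul, norm_smul, Real.norm_of_nonneg ha, Real.norm_of_nonneg hb,
          dist_eq_norm, dist_eq_norm]
    _ ≤ a * (infDist x K + ε) + b * (infDist y K + ε) := by gcongr
    _ = a * infDist x K + b * infDist y K + ε := by linear_combination ε * hab

end NormedSpace

section InnerProductSpace

variable {E : Type*} [NormedAddCommGroup E] [InnerProductSpace ℝ E]

lemma norm_smul_add_smul_sq {a b : ℝ} (hab : a + b = 1) (x y : E) :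
    ‖a • x + b • y‖ ^ 2 = a * ‖x‖ ^ 2 + b * ‖y‖ ^ 2 - a * b * ‖x - y‖ ^ 2 := by
  rw [norm_add_sq_real, norm_sub_sq_real, norm_smul, norm_smul, real_inner_smul_left,
    real_inner_smul_right, Real.norm_eq_abs, Real.norm_eq_abs, mul_pow, mul_pow, sq_abs, sq_abs]
  obtain rfl := eq_sub_of_add_eq hab
  ring

lemma le_infDist_smul_add_smul_sq (K : Set E) {a b : ℝ} (ha : 0 ≤ a) (hb : 0 ≤ b)
    (hab : a + b = 1) (x y : E) :
    a * infDist x K ^ 2 + b * infDist y K ^ 2 - a * b * ‖x - y‖ ^ 2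
      ≤ infDist (a • x + b • y) K ^ 2 := by
  rcases K.eq_empty_or_nonempty with rfl | hKne
  · simp only [infDist_empty]
    nlinarith [mul_nonneg (mul_nonneg ha hb) (sq_nonneg ‖x - y‖)]
  have hW : ∀ p ∈ K, a * infDist x K ^ 2 + b * infDist y K ^ 2 - a * b * ‖x - y‖ ^ 2
      ≤ dist (a • x + b • y) p ^ 2 := by
    intro p hp
    have hsplit : a • x + b • y - p = a • (x - p) + b • (y - p) := by
      conv_lhs => rw [← one_smul ℝ p, ← hab]
      module
    rw [dist_eq_norm, hsplit, norm_smul_add_smul_sq hab, sub_sub_sub_cancel_right]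
    gcongr <;> first | exact infDist_nonneg | exact dist_eq_norm _ p ▸ infDist_le_dist_of_mem hp
  by_contra! hlt
  obtain ⟨p, hp, hdp⟩ := (infDist_lt_iff hKne).1 (Real.lt_sqrt_of_sq_lt hlt)
  exact (hW p hp).not_gt ((Real.lt_sqrt dist_nonneg).1 hdp)

theorem convexOn_comp_infDist_add_sq {K : Set E} (hK : Convex ℝ K) {σ : ℝ → ℝ} {A C : ℝ}
    (hC : 0 < C) (hσ : ContDiff ℝ 2 σ) (hflat : ∀ t ∈ Icc (0 : ℝ) 1, σ t = A)
    (hσ' : ∀ t, 1 ≤ t → |deriv σ t| ≤ (t - 1) / C)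
    (hσ'' : ∀ t, |deriv (deriv σ) t| ≤ 1 / C) :
    ConvexOn ℝ univ (fun x => σ (infDist x K) + 4 / C * ‖x‖ ^ 2) := by
  refine ⟨convex_univ, fun x _ y _ a b ha hb hab => ?_⟩
  have hts : |infDist x K - infDist y K| ≤ ‖x - y‖ := by
    simpa [dist_eq_norm] using (lipschitz_infDist_pt K).dist_le_mul x y
  have hyz := infDist_le_infDist_smul_add_smul_add K ha ((add_comm b a).trans hab) y x
  rw [add_comm (b • y), norm_sub_rev] at hyz
  have key := apply_le_combo_add_of_near_combo hC hσ hflat hσ' hσ'' ha hb hab infDist_nonneg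
    (infDist_smul_add_smul_le hK ha hb hab x y) (le_infDist_smul_add_smul_sq K ha hb hab x y)
    (infDist_le_infDist_smul_add_smul_add K hb hab x y) hyz hts
  simp only [smul_eq_mul]
  rw [norm_smul_add_smul_sq hab]
  linear_combination key

end InnerProductSpace

theorem stmt14_general (d : ℕ) (K : Set (EuclideanSpace ℝ (Fin d))) (n R : ℝ) (σ : ℝ → ℝ)
    (hKsym : ∀ x ∈ K, -x ∈ K)
    (hKconv : Convex ℝ K)
    (hn : 1 < n) (C : ℝ) (hCdef : C = 8 * n ^ 2 / (n ^ 2 - 1))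
    (hσ : ContDiff ℝ 2 σ)
    (hσone : ∀ t ∈ Set.Icc (0 : ℝ) 1, σ t = R ^ 2)
    (hσ'1 : ∀ t, 1 ≤ t → |deriv σ t| ≤ (t - 1) / C)
    (hσ'' : ∀ t, |deriv (deriv σ) t| ≤ 1 / C) :
    (∀ x, Real.exp (-σ (Metric.infDist (-x) K) - ((n ^ 2 - 1) / (2 * n ^ 2)) * ‖-x‖ ^ 2) =
          Real.exp (-σ (Metric.infDist x K) - ((n ^ 2 - 1) / (2 * n ^ 2)) * ‖x‖ ^ 2)) ∧
    ConvexOn ℝ Set.univ (fun x =>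
      -Real.log (Real.exp (-σ (Metric.infDist x K) -
        ((n ^ 2 - 1) / (2 * n ^ 2)) * ‖x‖ ^ 2))) := by
  have hn2 : 0 < n ^ 2 - 1 := by nlinarith
  have hC : 0 < C := by rw [hCdef]; positivity
  have hc : (n ^ 2 - 1) / (2 * n ^ 2) = 4 / C := by
    rw [hCdef]; field_simp; ring
  refine ⟨fun x => by rw [infDist_neg_of_forall_neg_mem hKsym, norm_neg], ?_⟩
  refine (convexOn_comp_infDist_add_sq hKconv hC hσ hσone hσ'1 hσ'').congr fun x _ => ?_
  rw [Real.log_exp, hc]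
  ring

/-- the density x ↦ exp(−σ(d(x,K)) − ((n²−1)/(2n²))‖x‖²) is even and
log-concave. -/
theorem stmt14 (d : ℕ) (K : Set (EuclideanSpace ℝ (Fin d))) (n R : ℝ) (σ : ℝ → ℝ)
    (hKne : K.Nonempty) (hKsym : ∀ x ∈ K, -x ∈ K)
    (hKclosed : IsClosed K) (hKconv : Convex ℝ K)
    (hn : 1 < n) (hR : 0 < R) (C : ℝ) (hCdef : C = 8 * n ^ 2 / (n ^ 2 - 1))
    (hσ : ContDiff ℝ 2 σ) (hσmono : AntitoneOn σ (Set.Ici 0))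
    (hσone : ∀ t ∈ Set.Icc (0 : ℝ) 1, σ t = R ^ 2)
    (hσzero : ∀ t, 3 * C * R ≤ t → σ t = 0)
    (hσ'1 : ∀ t, 1 ≤ t → |deriv σ t| ≤ (t - 1) / C)
    (hσ'' : ∀ t, |deriv (deriv σ) t| ≤ 1 / C) :
    (∀ x, Real.exp (-σ (Metric.infDist (-x) K) - ((n ^ 2 - 1) / (2 * n ^ 2)) * ‖-x‖ ^ 2) =
          Real.exp (-σ (Metric.infDist x K) - ((n ^ 2 - 1) / (2 * n ^ 2)) * ‖x‖ ^ 2)) ∧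
    ConvexOn ℝ Set.univ (fun x =>
      -Real.log (Real.exp (-σ (Metric.infDist x K) -
        ((n ^ 2 - 1) / (2 * n ^ 2)) * ‖x‖ ^ 2))) :=
  stmt14_general d K n R σ hKsym hKconv hn C hCdef hσ hσone hσ'1 hσ''
end
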